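/- Let D = Σ c_{ij} XⁱYʲ ∈ ℂ[[X,Y]] be a nonzero formal power series and let m, n be coprime positive integers. Then for all but finitely many t ∈ ℂ, the intersection multiplicity satisfies i₀(Xⁿ − t·Yᵐ, D) = min{ m·i + n·j : c_{ij} ≠ 0 }; in particular this intersection multiplicity is finite and equals l((m,n), Δ_D), the minimum of the weighted degree m·i + n·j over the Newton diagram of D. -/

import Mathlib

/-- The closed first quadrant `ℝ₊² = [0,∞)²` of `ℝ²`. -/
def firstQuadrant : Set (ℝ × ℝ) := {p | 0 ≤ p.1 ∧ 0 ≤ p.2}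

/-- The Newton diagram of a set `S ⊆ ℝ²`: the convex hull of the union of the
translates `s + ℝ₊²` over `s ∈ S`. -/
noncomputable def newtonDiagram (S : Set (ℝ × ℝ)) : Set (ℝ × ℝ) :=
  convexHull ℝ (⋃ s ∈ S, (fun q => s + q) '' firstQuadrant)

/-- The support of a two-variable formal power series, viewed as a subset of `ℝ²`. -/
def powerSeriesSupport (h : MvPowerSeries (Fin 2) ℂ) : Set (ℝ × ℝ) :=
  {p | ∃ d : Fin 2 →₀ ℕ, MvPowerSeries.coeff (R := ℂ) d h ≠ 0 ∧ p = ((d 0 : ℝ), (d 1 : ℝ))}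

/-- The Newton diagram of a formal power series `h ∈ ℂ[[X,Y]]`. -/
noncomputable def newtonDiagramOf (h : MvPowerSeries (Fin 2) ℂ) : Set (ℝ × ℝ) :=
  newtonDiagram (powerSeriesSupport h)

/-- The intersection multiplicity `i₀(f,g) = dim_ℂ ℂ[[X,Y]]/(f,g)`. -/
noncomputable def interMult (f g : MvPowerSeries (Fin 2) ℂ) : ℕ :=
  Module.finrank ℂ (MvPowerSeries (Fin 2) ℂ ⧸ Ideal.span {f, g})

/-!
Write `t = αⁿ` with `α ≠ 0`. The substitution `φ : X ↦ αTᵐ, Y ↦ Tⁿ` maps `K⟦X,Y⟧` onto the series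
supported on the numerical semigroup `S = ℕm + ℕn`, with kernel `(Xⁿ - tYᵐ)`: modulo `Xⁿ - tYᵐ`
every series is congruent to one of `X`-degree `< n`, and by coprimality distinct such monomials
have distinct weights `mi + nj`. Hence `K⟦X,Y⟧ ⧸ (Xⁿ - tYᵐ, D) ≅ A ⧸ gA` with `A = K⟦S⟧`, `g = φ D`.
If `g` has order `N ∈ S`, the monomials `Tᵏ` with `k` in the Apéry set `S \ (N + S)` span a
complement of `gA` in `A`, and that set has exactly `N` elements.
For `N` the least weight of a monomial of `D`, the coefficient of `T^N` in `φ D` is a nonzero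
polynomial in `α`, so `g` has order `N` for all but finitely many `t`. On the Newton diagram a
linear form with nonnegative coefficients is minimised on the support of `D`.
-/

open scoped PowerSeries
open Finsupp (weight)

section Weights

variable (m n : ℕ)

theorem weight_pair_apply (d : Fin 2 →₀ ℕ) : weight ![m, n] d = m * d 0 + n * d 1 := by
  simp [Finsupp.weight_eq_sum, Fin.sum_univ_two, mul_comm]

noncomputable def pairIndex (i j : ℕ) : Fin 2 →₀ ℕ := Finsupp.single 0 i + Finsupp.single 1 j

@[simp] theorem pairIndex_apply_zero (i j : ℕ) : pairIndex i j 0 = i := by simp [pairIndex]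

@[simp] theorem pairIndex_apply_one (i j : ℕ) : pairIndex i j 1 = j := by simp [pairIndex]

theorem pairIndex_apply_self (d : Fin 2 →₀ ℕ) : pairIndex (d 0) (d 1) = d := by
  ext i; fin_cases i <;> simp

variable {m n}

theorem mem_closure_pair_iff_exists_weight {k : ℕ} :
    k ∈ AddSubmonoid.closure {m, n} ↔ ∃ d : Fin 2 →₀ ℕ, weight ![m, n] d = k := by
  simp only [AddSubmonoid.mem_closure_pair, weight_pair_apply, smul_eq_mul]
  constructor
  · rintro ⟨i, j, rfl⟩
    exact ⟨pairIndex i j, by simp [mul_comm]⟩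
  · rintro ⟨d, rfl⟩
    exact ⟨d 0, d 1, by ring⟩

theorem exists_weight_eq_of_lt (hn : 0 < n) {k : ℕ} (hk : k ∈ AddSubmonoid.closure {m, n}) :
    ∃ d : Fin 2 →₀ ℕ, d 0 < n ∧ weight ![m, n] d = k := by
  obtain ⟨i, j, rfl⟩ := (AddSubmonoid.mem_closure_pair _ _ _).1 hk
  refine ⟨pairIndex (i % n) (j + i / n * m), by simpa using Nat.mod_lt i hn, ?_⟩
  simp only [weight_pair_apply, pairIndex_apply_zero, pairIndex_apply_one, smul_eq_mul]
  nlinarith [Nat.mod_add_div i n]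

theorem eq_of_weight_eq_of_apply_zero_eq (hn : n ≠ 0) {d e : Fin 2 →₀ ℕ} (h0 : d 0 = e 0)
    (h : weight ![m, n] d = weight ![m, n] e) : d = e := by
  rw [weight_pair_apply, weight_pair_apply, h0] at h
  rw [← pairIndex_apply_self d, ← pairIndex_apply_self e, h0,
    Nat.eq_of_mul_eq_mul_left (Nat.pos_of_ne_zero hn) (Nat.add_left_cancel h)]

theorem eq_of_weight_eq_of_lt (hmn : m.Coprime n) {d e : Fin 2 →₀ ℕ} (hd : d 0 < n)
    (he : e 0 < n) (h : weight ![m, n] d = weight ![m, n] e) : d = e := by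
  refine eq_of_weight_eq_of_apply_zero_eq (by omega) ?_ h
  refine Nat.ModEq.eq_of_lt_of_lt (Nat.ModEq.cancel_left_of_coprime (c := m) ?_ ?_) hd he
  · rwa [Nat.gcd_comm]
  · rw [weight_pair_apply, weight_pair_apply] at h
    simpa [Nat.ModEq, Nat.add_mul_mod_self_left] using congrArg (· % n) h

theorem mem_closure_pair_of_mul_le (hmn : m.Coprime n) (hm : 0 < m) (hn : 0 < n) {k : ℕ}
    (hk : m * n ≤ k) : k ∈ AddSubmonoid.closure {m, n} := by
  have hone : ∀ a, a ∈ ({m, n} : Set ℕ) → a = 1 → k ∈ AddSubmonoid.closure {m, n} :=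
    fun a ha h1 => by simpa [h1] using AddSubmonoid.nsmul_mem _ (AddSubmonoid.subset_closure ha) k
  rcases Nat.lt_or_ge 1 m with hm1 | hm1
  · rcases Nat.lt_or_ge 1 n with hn1 | hn1
    · refine (frobeniusNumber_iff.1 (frobeniusNumber_pair hmn hm1 hn1)).2 k ?_
      have := Nat.mul_pos hm hn
      omega
    · exact hone n (by simp) (by omega)
  · exact hone m (by simp) (by omega)

variable (m n) [NeZero m] [NeZero n]

noncomputable def weightFiber (k : ℕ) : Finset (Fin 2 →₀ ℕ) :=
  (Finsupp.finite_of_nat_weight_eq ![m, n]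
    (fun i => by fin_cases i <;> simp [NeZero.ne]) k).toFinset

variable {m n}

@[simp] theorem mem_weightFiber {k : ℕ} {d : Fin 2 →₀ ℕ} :
    d ∈ weightFiber m n k ↔ weight ![m, n] d = k := by
  simp [weightFiber]

theorem weightFiber_eq_empty {k : ℕ} (hk : k ∉ AddSubmonoid.closure {m, n}) :
    weightFiber m n k = ∅ :=
  Finset.eq_empty_of_forall_notMem fun d hd =>
    hk (mem_closure_pair_iff_exists_weight.2 ⟨d, mem_weightFiber.1 hd⟩)

end Weights

section SemigroupSeries

open PowerSeries

variable (K : Type*) [Field K]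

def seriesSupportedOn (s : Set ℕ) : Submodule K K⟦X⟧ where
  carrier := {h | ∀ k ∉ s, coeff k h = 0}
  add_mem' ha hb k hk := by rw [map_add, ha k hk, hb k hk, add_zero]
  zero_mem' k _ := map_zero _
  smul_mem' c _ ha k hk := by rw [map_smul, ha k hk, smul_zero]

variable {K}

theorem X_pow_mem_seriesSupportedOn {s : Set ℕ} {k : ℕ} (hk : k ∈ s) :
    (X : K⟦X⟧) ^ k ∈ seriesSupportedOn K s := fun l hl => by
  rw [coeff_X_pow, if_neg (by rintro rfl; exact hl hk)]

theorem linearIndependent_X_pow : LinearIndependent K fun k : ℕ => (X : K⟦X⟧) ^ k := by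
  refine linearIndependent_iff'.2 fun s c hsum i hi => ?_
  simpa [coeff_X_pow, Finset.sum_ite_eq', hi] using congrArg (coeff i) hsum

theorem seriesSupportedOn_finset (s : Finset ℕ) :
    seriesSupportedOn K s = Submodule.span K (Set.range fun k : s => (X : K⟦X⟧) ^ (k : ℕ)) := by
  refine le_antisymm (fun h hh => ?_) (Submodule.span_le.2 ?_)
  · have hsum : h = ∑ k ∈ s, coeff k h • X ^ k := by
      ext l
      by_cases hl : l ∈ s <;> simp [coeff_X_pow, hl, hh l]
    rw [hsum, ← Finset.sum_coe_sort]
    exact Submodule.sum_mem _ fun k _ => Submodule.smul_mem _ _ (Submodule.subset_span ⟨k, rfl⟩)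
  · rintro _ ⟨k, rfl⟩
    exact X_pow_mem_seriesSupportedOn (Finset.mem_coe.2 k.2)

theorem finiteDimensional_seriesSupportedOn_finset (s : Finset ℕ) :
    FiniteDimensional K (seriesSupportedOn K s) := by
  rw [seriesSupportedOn_finset]
  exact FiniteDimensional.span_of_finite K (Set.finite_range _)

theorem finrank_seriesSupportedOn_finset (s : Finset ℕ) :
    Module.finrank K (seriesSupportedOn K s) = s.card := by
  rw [seriesSupportedOn_finset]
  exact (finrank_span_eq_card (linearIndependent_X_pow.comp _ Subtype.val_injective)).trans
    (Fintype.card_coe s)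

variable (S : AddSubmonoid ℕ)

theorem mul_mem_seriesSupportedOn {a b : K⟦X⟧} (ha : a ∈ seriesSupportedOn K S)
    (hb : b ∈ seriesSupportedOn K S) : a * b ∈ seriesSupportedOn K S := by
  intro k hk
  rw [coeff_mul]
  refine Finset.sum_eq_zero fun p hp => ?_
  rw [Finset.HasAntidiagonal.mem_antidiagonal] at hp
  by_cases hp1 : p.1 ∈ S
  · rw [hb p.2 fun hp2 => hk (hp ▸ S.add_mem hp1 hp2), mul_zero]
  · rw [ha p.1 hp1, zero_mul]

theorem X_pow_mul_mem_seriesSupportedOn {c : ℕ} (hc : ∀ k, c ≤ k → k ∈ S) (h : K⟦X⟧) :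
    X ^ c * h ∈ seriesSupportedOn K S := fun k hk => by
  rw [coeff_X_pow_mul', if_neg fun hck => hk (hc k hck)]

open scoped Classical in
/-- The Apéry set `S \ (N + S)`, cut off at `N + c`; it lies below that bound when every `k ≥ c`
is in `S`. -/
noncomputable def aperyFinset (N c : ℕ) : Finset ℕ :=
  (Finset.range (N + c)).filter fun k => k ∈ S ∧ ∀ s ∈ S, N + s ≠ k

theorem mem_aperyFinset {N c k : ℕ} :
    k ∈ aperyFinset S N c ↔ k < N + c ∧ k ∈ S ∧ ∀ s ∈ S, N + s ≠ k := by
  simp [aperyFinset]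

theorem card_aperyFinset {N c : ℕ} (hc : ∀ k, c ≤ k → k ∈ S) (hN : N ∈ S) :
    (aperyFinset S N c).card = N := by
  classical
  set low := (Finset.range c).filter (· ∈ S)
  have hsplit : (Finset.range (N + c)).filter (· ∈ S) = low ∪ Finset.Ico c (N + c) := by
    ext k
    simp only [low, Finset.mem_filter, Finset.mem_range, Finset.mem_union, Finset.mem_Ico]
    constructor
    · rintro ⟨hkN, hkS⟩
      by_cases hkc : k < c
      exacts [Or.inl ⟨hkc, hkS⟩, Or.inr ⟨by omega, hkN⟩]
    · rintro (⟨hkc, hkS⟩ | ⟨hck, hkN⟩)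
      exacts [⟨by omega, hkS⟩, ⟨hkN, hc k hck⟩]
  have hshift : low.image (N + ·) ⊆ (Finset.range (N + c)).filter (· ∈ S) := by
    simp only [low, Finset.image_subset_iff, Finset.mem_filter, Finset.mem_range]
    exact fun s ⟨hsc, hsS⟩ => ⟨by omega, S.add_mem hN hsS⟩
  have hapery : aperyFinset S N c = (Finset.range (N + c)).filter (· ∈ S) \ low.image (N + ·) := by
    ext k
    simp only [mem_aperyFinset, low, Finset.mem_sdiff, Finset.mem_filter, Finset.mem_range,
      Finset.mem_image]
    constructor
    · rintro ⟨hkN, hkS, hk⟩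
      exact ⟨⟨hkN, hkS⟩, fun ⟨s, ⟨_, hsS⟩, hs⟩ => hk s hsS hs⟩
    · rintro ⟨⟨hkN, hkS⟩, hk⟩
      exact ⟨hkN, hkS, fun s hsS hs => hk ⟨s, ⟨by omega, hsS⟩, hs⟩⟩
  have hdisj : Disjoint low (Finset.Ico c (N + c)) := by
    simp only [low, Finset.disjoint_left, Finset.mem_filter, Finset.mem_range, Finset.mem_Ico]
    omega
  rw [hapery, Finset.card_sdiff_of_subset hshift, hsplit, Finset.card_union_of_disjoint hdisj,
    Finset.card_image_of_injective _ (add_right_injective N), Nat.card_Ico]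
  omega

variable {S} {g : K⟦X⟧} {N c : ℕ}

theorem seriesSupportedOn_apery_le :
    seriesSupportedOn K (aperyFinset S N c) ≤ seriesSupportedOn K S :=
  fun _ hv k hk => hv k fun hmem => hk ((mem_aperyFinset S).1 hmem).2.1

theorem disjoint_seriesSupportedOn_apery_map_mul (hg : g.order = N) :
    Disjoint (seriesSupportedOn K (aperyFinset S N c))
      ((seriesSupportedOn K S).map (LinearMap.mulLeft K g)) := by
  rw [Submodule.disjoint_def]
  rintro _ hV ⟨b, hb, rfl⟩
  by_contra hgb
  have hb0 : b ≠ 0 := by rintro rfl; exact hgb (mul_zero g)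
  obtain ⟨s, hs⟩ := ENat.ne_top_iff_exists.1 (order_eq_top.not.2 hb0)
  have hsS : s ∈ S := by_contra fun h => (order_eq_nat.1 hs.symm).1 (hb s h)
  have horder : (g * b).order = (N + s : ℕ) := by rw [order_mul, hg, ← hs, Nat.cast_add]
  refine (order_eq_nat.1 horder).1 (hV _ fun hmem => ?_)
  exact ((mem_aperyFinset S).1 hmem).2.2 s hsS rfl

theorem mem_map_mul_of_X_pow_dvd (hc : ∀ k, c ≤ k → k ∈ S) (hg : g.order = N) {h : K⟦X⟧}
    (hh : X ^ (N + c) ∣ h) : h ∈ (seriesSupportedOn K S).map (LinearMap.mulLeft K g) := by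
  obtain ⟨hgN, hglt⟩ := order_eq_nat.1 hg
  obtain ⟨u, rfl⟩ := X_pow_dvd_iff.2 hglt
  have hu : constantCoeff u ≠ 0 := by
    rwa [coeff_X_pow_mul', if_pos le_rfl, Nat.sub_self, coeff_zero_eq_constantCoeff] at hgN
  obtain ⟨h', rfl⟩ := hh
  refine ⟨X ^ c * (u⁻¹ * h'), X_pow_mul_mem_seriesSupportedOn S hc _, ?_⟩
  calc X ^ N * u * (X ^ c * (u⁻¹ * h')) = X ^ (N + c) * h' * (u * u⁻¹) := by ring
    _ = X ^ (N + c) * h' := by rw [PowerSeries.mul_inv_cancel u hu, mul_one]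

theorem exists_mem_sup_X_pow_dvd_coeff_eq_one (hg : g.order = N) {k : ℕ} (hkS : k ∈ S)
    (hkc : k < N + c) :
    ∃ p ∈ seriesSupportedOn K (aperyFinset S N c) ⊔
        (seriesSupportedOn K S).map (LinearMap.mulLeft K g), X ^ k ∣ p ∧ coeff k p = 1 := by
  by_cases hk : ∀ s ∈ S, N + s ≠ k
  · refine ⟨X ^ k, Submodule.mem_sup_left (X_pow_mem_seriesSupportedOn ?_), dvd_rfl, by simp⟩
    exact (mem_aperyFinset S).2 ⟨hkc, hkS, hk⟩
  push Not at hk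
  obtain ⟨s, hsS, rfl⟩ := hk
  obtain ⟨hgN, hglt⟩ := order_eq_nat.1 hg
  refine ⟨(coeff N g)⁻¹ • (g * X ^ s), Submodule.mem_sup_right ?_, ?_, ?_⟩
  · exact Submodule.smul_mem _ _ ⟨X ^ s, X_pow_mem_seriesSupportedOn hsS, rfl⟩
  · rw [smul_eq_C_mul, pow_add]
    exact (mul_dvd_mul_right (X_pow_dvd_iff.2 hglt) _).mul_left _
  · rw [coeff_smul, coeff_mul_X_pow, smul_eq_mul, inv_mul_cancel₀ hgN]

theorem le_seriesSupportedOn_apery_sup_map_mul (hc : ∀ k, c ≤ k → k ∈ S)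
    (hgS : g ∈ seriesSupportedOn K S) (hg : g.order = N) :
    seriesSupportedOn K S ≤ seriesSupportedOn K (aperyFinset S N c) ⊔
      (seriesSupportedOn K S).map (LinearMap.mulLeft K g) := by
  set U := seriesSupportedOn K (aperyFinset S N c) ⊔
    (seriesSupportedOn K S).map (LinearMap.mulLeft K g)
  have hUA : U ≤ seriesSupportedOn K S := by
    refine sup_le seriesSupportedOn_apery_le ?_
    rintro _ ⟨b, hb, rfl⟩
    exact mul_mem_seriesSupportedOn S hgS hb
  suffices H : ∀ k ≤ N + c, ∀ h ∈ seriesSupportedOn K S, X ^ k ∣ h → h ∈ U from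
    fun h hh => H 0 (Nat.zero_le _) h hh (by simp)
  intro k hk
  induction hk using Nat.decreasingInduction with
  | self => exact fun h _ hh => Submodule.mem_sup_right (mem_map_mul_of_X_pow_dvd hc hg hh)
  | of_succ k hkc ih =>
    intro h hh hdvd
    have hlow := X_pow_dvd_iff.1 hdvd
    by_cases hkS : k ∈ S
    · obtain ⟨p, hpU, hpdvd, hpk⟩ := exists_mem_sup_X_pow_dvd_coeff_eq_one hg hkS hkc
      have hrest : h - coeff k h • p ∈ U := by
        refine ih _ (Submodule.sub_mem _ hh (Submodule.smul_mem _ _ (hUA hpU))) ?_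
        refine X_pow_dvd_iff.2 fun l hl => ?_
        rcases Nat.lt_succ_iff_lt_or_eq.1 hl with hl | rfl
        · rw [map_sub, coeff_smul, hlow l hl, X_pow_dvd_iff.1 hpdvd l hl, smul_zero, sub_zero]
        · rw [map_sub, coeff_smul, hpk, smul_eq_mul, mul_one, sub_self]
      simpa using Submodule.add_mem _ hrest (Submodule.smul_mem _ (coeff k h) hpU)
    · refine ih h hh (X_pow_dvd_iff.2 fun l hl => ?_)
      rcases Nat.lt_succ_iff_lt_or_eq.1 hl with hl | rfl
      exacts [hlow l hl, hh l hkS]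

end SemigroupSeries

theorem Submodule.nonempty_quotient_comap_equiv {R M E : Type*} [Ring R] [AddCommGroup M]
    [Module R M] [AddCommGroup E] [Module R E] (Φ : M →ₗ[R] E) {V W : Submodule R E}
    (hVW : Disjoint V W) (hV : V ≤ LinearMap.range Φ) (hΦ : LinearMap.range Φ ≤ V ⊔ W) :
    Nonempty ((M ⧸ W.comap Φ) ≃ₗ[R] V) := by
  have hinj : Function.Injective (W.mkQ ∘ₗ V.subtype) := by
    rw [← LinearMap.ker_eq_bot, LinearMap.ker_comp, Submodule.ker_mkQ,
      ← Submodule.disjoint_iff_comap_eq_bot]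
    exact hVW
  have hrange : LinearMap.range (W.mkQ ∘ₗ Φ) = LinearMap.range (W.mkQ ∘ₗ V.subtype) := by
    rw [LinearMap.range_comp, LinearMap.range_comp, Submodule.range_subtype]
    refine le_antisymm ?_ (Submodule.map_mono hV)
    refine (Submodule.map_mono hΦ).trans ?_
    rw [Submodule.map_sup, Submodule.mkQ_map_self, sup_bot_eq]
  have hker : LinearMap.ker (W.mkQ ∘ₗ Φ) = W.comap Φ := by
    rw [LinearMap.ker_comp, Submodule.ker_mkQ]
  exact ⟨(Submodule.quotEquivOfEq _ _ hker.symm).trans <| (W.mkQ ∘ₗ Φ).quotKerEquivRange.trans <|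
    (LinearEquiv.ofEq _ _ hrange).trans (LinearEquiv.ofInjective _ hinj).symm⟩

section Division

open MvPowerSeries

variable {R : Type*} [CommRing R] (m n : ℕ) (t : R)

/-- The coefficient of `XⁱYʲ` after every monomial `X^(i+an) Y^(j-am)` of `F` has been rewritten
using `Xⁿ = tYᵐ` as `tᵃ XⁱYʲ`. -/
noncomputable def reductionSum (F : MvPowerSeries (Fin 2) R) (i j : ℕ) : R :=
  ∑ a ∈ Finset.range (j / m + 1), t ^ a * coeff (pairIndex (i + a * n) (j - a * m)) F

variable {m}

theorem reductionSum_eq (hm : 0 < m) (F : MvPowerSeries (Fin 2) R) (i j : ℕ) :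
    reductionSum m n t F i j = coeff (pairIndex i j) F +
      if m ≤ j then t * reductionSum m n t F (i + n) (j - m) else 0 := by
  rw [reductionSum, Finset.sum_range_succ']
  simp only [pow_zero, one_mul, zero_mul, add_zero, Nat.sub_zero, add_comm (coeff _ F)]
  congr 1
  split_ifs with hj
  · rw [reductionSum, Finset.mul_sum, Nat.div_eq_sub_div hm hj]
    refine Finset.sum_congr rfl fun a _ => ?_
    rw [show i + (a + 1) * n = i + n + a * n by ring,
      show j - (a + 1) * m = j - m - a * m by rw [Nat.sub_sub, add_mul, one_mul, add_comm m]]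
    ring
  · rw [Nat.div_eq_of_lt (not_le.1 hj)]
    simp

theorem exists_reduced_sub_mem_span (hm : 0 < m) (F : MvPowerSeries (Fin 2) R) :
    ∃ r : MvPowerSeries (Fin 2) R, (∀ d, n ≤ d 0 → coeff d r = 0) ∧
      F - r ∈ Ideal.span {X 0 ^ n - C t * X 1 ^ m} := by
  let Q : MvPowerSeries (Fin 2) R := fun d => reductionSum m n t F (d 0 + n) (d 1)
  let r : MvPowerSeries (Fin 2) R := fun d =>
    if d 0 < n then reductionSum m n t F (d 0) (d 1) else 0
  have hQ : ∀ e, coeff e Q = reductionSum m n t F (e 0 + n) (e 1) := fun _ => rfl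
  have hr : ∀ e, coeff e r = if e 0 < n then reductionSum m n t F (e 0) (e 1) else 0 :=
    fun _ => rfl
  refine ⟨r, fun d hd => (hr d).trans (if_neg (not_lt.2 hd)), Ideal.mem_span_singleton'.2 ⟨Q, ?_⟩⟩
  ext d
  have hQX0 : coeff d (Q * X 0 ^ n) = if n ≤ d 0 then reductionSum m n t F (d 0) (d 1) else 0 := by
    rw [X_pow_eq, coeff_mul_monomial, mul_one]
    by_cases h : n ≤ d 0
    · rw [if_pos (Finsupp.single_le_iff.2 h), if_pos h]
      simp [hQ, Nat.sub_add_cancel h]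
    · rw [if_neg (mt Finsupp.single_le_iff.1 h), if_neg h]
  have hQX1 : coeff d (Q * X 1 ^ m) =
      if m ≤ d 1 then reductionSum m n t F (d 0 + n) (d 1 - m) else 0 := by
    rw [X_pow_eq, coeff_mul_monomial, mul_one]
    by_cases h : m ≤ d 1
    · rw [if_pos (Finsupp.single_le_iff.2 h), if_pos h]
      simp [hQ]
    · rw [if_neg (mt Finsupp.single_le_iff.1 h), if_neg h]
  have hF := reductionSum_eq n t hm F (d 0) (d 1)
  rw [pairIndex_apply_self] at hF
  rw [mul_sub, map_sub, mul_left_comm, coeff_C_mul, hQX0, hQX1, map_sub, hr]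
  split_ifs at hF ⊢ <;> first | omega | (rw [hF]; ring)

end Division

section CurveParametrization

variable {R : Type*} [CommRing R] (m n : ℕ) [NeZero m] [NeZero n]

noncomputable def curveParam (α : R) : Fin 2 → R⟦X⟧ :=
  ![PowerSeries.C α * PowerSeries.X ^ m, PowerSeries.X ^ n]

theorem hasSubst_curveParam (α : R) : MvPowerSeries.HasSubst (curveParam m n α) :=
  MvPowerSeries.hasSubst_of_constantCoeff_zero fun i => by
    change PowerSeries.constantCoeff _ = 0
    fin_cases i <;> simp [curveParam, NeZero.ne]

noncomputable def paramHom (α : R) : MvPowerSeries (Fin 2) R →ₐ[R] R⟦X⟧ :=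
  MvPowerSeries.substAlgHom (hasSubst_curveParam m n α)

omit [NeZero m] [NeZero n] in
theorem prod_curveParam_pow (α : R) (d : Fin 2 →₀ ℕ) :
    (d.prod fun s e => curveParam m n α s ^ e) =
      PowerSeries.C (α ^ d 0) * PowerSeries.X ^ weight ![m, n] d := by
  rw [Finsupp.prod_fintype _ _ (by simp), Fin.prod_univ_two, weight_pair_apply]
  simp only [curveParam, Matrix.cons_val_zero, Matrix.cons_val_one, mul_pow, ← pow_mul, pow_add,
    map_pow]
  ring

theorem coeff_paramHom (α : R) (F : MvPowerSeries (Fin 2) R) (k : ℕ) :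
    PowerSeries.coeff k (paramHom m n α F) =
      ∑ d ∈ weightFiber m n k, MvPowerSeries.coeff d F * α ^ d 0 := by
  rw [paramHom, MvPowerSeries.substAlgHom_apply, PowerSeries.coeff,
    MvPowerSeries.coeff_subst (hasSubst_curveParam m n α),
    finsum_eq_sum_of_support_subset _ (s := weightFiber m n k)]
  · refine Finset.sum_congr rfl fun d hd => ?_
    rw [prod_curveParam_pow, ← PowerSeries.coeff, PowerSeries.coeff_C_mul_X_pow,
      if_pos (mem_weightFiber.1 hd).symm, smul_eq_mul]
  · intro d hd
    rw [Function.mem_support, prod_curveParam_pow, ← PowerSeries.coeff,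
      PowerSeries.coeff_C_mul_X_pow] at hd
    by_contra h
    exact hd (by rw [if_neg (Ne.symm (by simpa using h)), smul_zero])

theorem paramHom_X_pow_sub (α : R) :
    paramHom m n α (MvPowerSeries.X 0 ^ n - MvPowerSeries.C (α ^ n) * MvPowerSeries.X 1 ^ m) =
      0 := by
  simp only [paramHom, map_sub, map_mul, map_pow, MvPowerSeries.c_eq_algebraMap, AlgHom.commutes,
    MvPowerSeries.substAlgHom_X, curveParam, Matrix.cons_val_zero, Matrix.cons_val_one, mul_pow,
    ← pow_mul, PowerSeries.algebraMap_eq, mul_comm m n, sub_self]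

end CurveParametrization

section KernelAndImage

variable {K : Type*} [Field K] {m n : ℕ} [NeZero m] [NeZero n] {α : K}

theorem paramHom_mem_seriesSupportedOn (α : K) (F : MvPowerSeries (Fin 2) K) :
    paramHom m n α F ∈ seriesSupportedOn K (AddSubmonoid.closure {m, n}) := fun k hk => by
  rw [coeff_paramHom, weightFiber_eq_empty hk, Finset.sum_empty]

theorem range_paramHom (hmn : m.Coprime n) (hα : α ≠ 0) :
    LinearMap.range (paramHom m n α).toLinearMap =
      seriesSupportedOn K (AddSubmonoid.closure {m, n}) := by
  refine le_antisymm ?_ fun h hh => ?_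
  · rintro _ ⟨F, rfl⟩
    exact paramHom_mem_seriesSupportedOn α F
  let F : MvPowerSeries (Fin 2) K := fun d =>
    if d 0 < n then PowerSeries.coeff (weight ![m, n] d) h / α ^ d 0 else 0
  have hF : ∀ d, MvPowerSeries.coeff d F =
      if d 0 < n then PowerSeries.coeff (weight ![m, n] d) h / α ^ d 0 else 0 := fun _ => rfl
  refine ⟨F, PowerSeries.ext fun k => ?_⟩
  rw [AlgHom.toLinearMap_apply, coeff_paramHom]
  by_cases hk : k ∈ AddSubmonoid.closure {m, n}
  · obtain ⟨d, hdn, rfl⟩ := exists_weight_eq_of_lt (Nat.pos_of_neZero n) hk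
    rw [Finset.sum_eq_single d, hF, if_pos hdn, div_mul_cancel₀ _ (pow_ne_zero _ hα)]
    · intro e he hed
      rw [hF]
      split_ifs with he0
      · exact absurd (eq_of_weight_eq_of_lt hmn he0 hdn (mem_weightFiber.1 he)) hed
      · exact zero_mul _
    · exact fun hd => absurd (mem_weightFiber.2 rfl) hd
  · rw [weightFiber_eq_empty hk, Finset.sum_empty, hh k hk]

theorem eq_zero_of_paramHom_eq_zero (hmn : m.Coprime n) (hα : α ≠ 0)
    {r : MvPowerSeries (Fin 2) K} (hr : ∀ d, n ≤ d 0 → MvPowerSeries.coeff d r = 0)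
    (h : paramHom m n α r = 0) : r = 0 := by
  ext d
  rw [map_zero]
  by_cases hd : d 0 < n
  · have hcoeff := congrArg (PowerSeries.coeff (weight ![m, n] d)) h
    rw [coeff_paramHom, map_zero, Finset.sum_eq_single d] at hcoeff
    · exact (mul_eq_zero.1 hcoeff).resolve_right (pow_ne_zero _ hα)
    · intro e he hed
      by_cases he0 : e 0 < n
      · exact absurd (eq_of_weight_eq_of_lt hmn he0 hd (mem_weightFiber.1 he)) hed
      · rw [hr e (not_lt.1 he0), zero_mul]
    · exact fun hd => absurd (mem_weightFiber.2 rfl) hd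
  · exact hr d (not_lt.1 hd)

theorem ker_paramHom (hmn : m.Coprime n) (hα : α ≠ 0) :
    RingHom.ker (paramHom m n α) =
      Ideal.span {MvPowerSeries.X 0 ^ n - MvPowerSeries.C (α ^ n) * MvPowerSeries.X 1 ^ m} := by
  have hspan : Ideal.span {MvPowerSeries.X 0 ^ n - MvPowerSeries.C (α ^ n) * MvPowerSeries.X 1 ^ m}
      ≤ RingHom.ker (paramHom m n α) :=
    Ideal.span_le.2 (Set.singleton_subset_iff.2 (paramHom_X_pow_sub m n α))
  refine le_antisymm (fun F hF => ?_) hspan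
  obtain ⟨r, hr, hFr⟩ := exists_reduced_sub_mem_span n (α ^ n) (Nat.pos_of_neZero m) F
  have hr0 : r = 0 := by
    refine eq_zero_of_paramHom_eq_zero hmn hα hr ?_
    rw [← sub_sub_cancel F r, map_sub, RingHom.mem_ker.1 hF, RingHom.mem_ker.1 (hspan hFr),
      sub_zero]
  rwa [hr0, sub_zero] at hFr

theorem comap_paramHom_map_mul (hmn : m.Coprime n) (hα : α ≠ 0) (D : MvPowerSeries (Fin 2) K) :
    ((seriesSupportedOn K (AddSubmonoid.closure {m, n})).map
        (LinearMap.mulLeft K (paramHom m n α D))).comap (paramHom m n α).toLinearMap =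
      (Ideal.span {MvPowerSeries.X 0 ^ n - MvPowerSeries.C (α ^ n) * MvPowerSeries.X 1 ^ m,
        D}).restrictScalars K := by
  have hrange := range_paramHom (K := K) hmn hα
  ext F
  rw [Submodule.mem_comap, Submodule.restrictScalars_mem, Ideal.mem_span_pair]
  constructor
  · rintro ⟨_, hy, hyF⟩
    obtain ⟨b, rfl⟩ := hrange.ge hy
    have hker : F - D * b ∈ RingHom.ker (paramHom m n α) := by
      rw [RingHom.mem_ker, map_sub, map_mul]
      exact sub_eq_zero.2 hyF.symm
    rw [ker_paramHom hmn hα] at hker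
    obtain ⟨a, ha⟩ := Ideal.mem_span_singleton'.1 hker
    exact ⟨a, b, by rw [ha]; ring⟩
  · rintro ⟨a, b, rfl⟩
    refine ⟨paramHom m n α b, paramHom_mem_seriesSupportedOn α b, ?_⟩
    change paramHom m n α D * paramHom m n α b = paramHom m n α (_ + _)
    rw [map_add, map_mul, map_mul, paramHom_X_pow_sub, mul_zero, zero_add, mul_comm]

theorem finiteDimensional_quotient_and_finrank_eq_order (hmn : m.Coprime n) (hα : α ≠ 0)
    {D : MvPowerSeries (Fin 2) K} {N : ℕ} (hD : (paramHom m n α D).order = N) :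
    FiniteDimensional K (MvPowerSeries (Fin 2) K ⧸ Ideal.span
        {MvPowerSeries.X 0 ^ n - MvPowerSeries.C (α ^ n) * MvPowerSeries.X 1 ^ m, D}) ∧
      Module.finrank K (MvPowerSeries (Fin 2) K ⧸ Ideal.span
        {MvPowerSeries.X 0 ^ n - MvPowerSeries.C (α ^ n) * MvPowerSeries.X 1 ^ m, D}) = N := by
  set S := AddSubmonoid.closure ({m, n} : Set ℕ)
  have hc : ∀ k, m * n ≤ k → k ∈ S :=
    fun k => mem_closure_pair_of_mul_le hmn (Nat.pos_of_neZero m) (Nat.pos_of_neZero n)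
  have hrange := range_paramHom hmn hα
  have hgS := paramHom_mem_seriesSupportedOn (m := m) (n := n) α D
  have hNS : N ∈ S := by_contra fun h => (PowerSeries.order_eq_nat.1 hD).1 (hgS N h)
  obtain ⟨e⟩ := Submodule.nonempty_quotient_comap_equiv (paramHom m n α).toLinearMap
    (disjoint_seriesSupportedOn_apery_map_mul (c := m * n) hD)
    (seriesSupportedOn_apery_le.trans hrange.ge)
    (hrange.le.trans (le_seriesSupportedOn_apery_sup_map_mul hc hgS hD))
  let e' := (Submodule.Quotient.restrictScalarsEquiv K _).symm.trans
    ((Submodule.quotEquivOfEq _ _ (comap_paramHom_map_mul hmn hα D).symm).trans e)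
  have := finiteDimensional_seriesSupportedOn_finset (K := K) (aperyFinset S N (m * n))
  exact ⟨Module.Finite.equiv e'.symm, e'.finrank_eq.trans
    ((finrank_seriesSupportedOn_finset _).trans (card_aperyFinset S hc hNS))⟩

end KernelAndImage

section InitialForm

variable {R : Type*} [CommRing R] (m n : ℕ) [NeZero m] [NeZero n]

noncomputable def weightedInitialPoly (D : MvPowerSeries (Fin 2) R) (N : ℕ) : Polynomial R :=
  ∑ d ∈ weightFiber m n N, Polynomial.monomial (d 0) (MvPowerSeries.coeff d D)

variable {m n}

theorem eval_weightedInitialPoly (α : R) (D : MvPowerSeries (Fin 2) R) (N : ℕ) :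
    (weightedInitialPoly m n D N).eval α = PowerSeries.coeff N (paramHom m n α D) := by
  simp [weightedInitialPoly, coeff_paramHom, Polynomial.eval_finsetSum]

theorem weightedInitialPoly_ne_zero {D : MvPowerSeries (Fin 2) R} {d : Fin 2 →₀ ℕ}
    (hd : MvPowerSeries.coeff d D ≠ 0) : weightedInitialPoly m n D (weight ![m, n] d) ≠ 0 := by
  intro h
  have hcoeff := congrArg (Polynomial.coeff · (d 0)) h
  simp only [weightedInitialPoly, Polynomial.finsetSum_coeff, Polynomial.coeff_monomial,
    Polynomial.coeff_zero] at hcoeff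
  rw [Finset.sum_eq_single d (fun e he hed => if_neg fun h0 => hed
      (eq_of_weight_eq_of_apply_zero_eq (NeZero.ne (n : ℕ)) h0 (mem_weightFiber.1 he)))
    (fun hd' => absurd (mem_weightFiber.2 rfl) hd'), if_pos rfl] at hcoeff
  exact hd hcoeff

theorem order_paramHom_eq {α : R} {D : MvPowerSeries (Fin 2) R} {N : ℕ}
    (hmin : ∀ d, MvPowerSeries.coeff d D ≠ 0 → N ≤ weight ![m, n] d)
    (hα : (weightedInitialPoly m n D N).eval α ≠ 0) : (paramHom m n α D).order = N := by
  refine PowerSeries.order_eq_nat.2 ⟨?_, fun k hk => ?_⟩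
  · rwa [← eval_weightedInitialPoly]
  rw [coeff_paramHom]
  refine Finset.sum_eq_zero fun d hd => ?_
  rw [not_imp_comm.1 (hmin d) (by rw [mem_weightFiber.1 hd]; omega), zero_mul]

end InitialForm

theorem isLeast_image_newtonDiagram {S : Set (ℝ × ℝ)} {a b : ℝ} (ha : 0 ≤ a) (hb : 0 ≤ b)
    {p : ℝ × ℝ} (hp : p ∈ S) (hmin : ∀ q ∈ S, a * p.1 + b * p.2 ≤ a * q.1 + b * q.2) :
    IsLeast ((fun q : ℝ × ℝ => a * q.1 + b * q.2) '' newtonDiagram S) (a * p.1 + b * p.2) := by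
  refine ⟨⟨p, subset_convexHull ℝ _ ?_, rfl⟩, ?_⟩
  · exact Set.mem_biUnion hp ⟨0, ⟨le_rfl, le_rfl⟩, add_zero p⟩
  rintro _ ⟨q, hq, rfl⟩
  have hlin : IsLinearMap ℝ fun q : ℝ × ℝ => a * q.1 + b * q.2 :=
    (a • LinearMap.fst ℝ ℝ ℝ + b • LinearMap.snd ℝ ℝ ℝ).isLinear
  refine convexHull_min ?_ (convex_halfSpace_ge hlin _) hq
  simp only [Set.iUnion_subset_iff, Set.image_subset_iff]
  intro s hs r ⟨hr1, hr2⟩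
  have := hmin s hs
  simp only [Set.mem_preimage, Set.mem_ofPred_eq, Prod.fst_add, Prod.snd_add]
  nlinarith [mul_nonneg ha hr1, mul_nonneg hb hr2]

theorem sInf_image_newtonDiagramOf {m n : ℕ} {D : MvPowerSeries (Fin 2) ℂ} {d₁ : Fin 2 →₀ ℕ}
    (hd₁ : MvPowerSeries.coeff d₁ D ≠ 0)
    (hmin : ∀ d, MvPowerSeries.coeff d D ≠ 0 → weight ![m, n] d₁ ≤ weight ![m, n] d) :
    sInf ((fun p : ℝ × ℝ => m * p.1 + n * p.2) '' newtonDiagramOf D) = weight ![m, n] d₁ := by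
  have hlower : ∀ q ∈ powerSeriesSupport D,
      (m : ℝ) * (d₁ 0 : ℝ) + (n : ℝ) * (d₁ 1 : ℝ) ≤ m * q.1 + n * q.2 := by
    rintro _ ⟨d, hd, rfl⟩
    have := hmin d hd
    rw [weight_pair_apply, weight_pair_apply] at this
    dsimp only
    exact_mod_cast this
  rw [newtonDiagramOf, (isLeast_image_newtonDiagram (S := powerSeriesSupport D) (p := (d₁ 0, d₁ 1))
    (Nat.cast_nonneg m) (Nat.cast_nonneg n) ⟨d₁, hd₁, rfl⟩ hlower).csInf_eq, weight_pair_apply]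
  push_cast
  rfl

/-- Let `D ∈ ℂ[[X,Y]]` be nonzero and `m, n` coprime positive
integers.  For all but finitely many `t ∈ ℂ`, the intersection multiplicity
`i₀(Xⁿ − t·Yᵐ, D)` equals `min{ m·i + n·j : c_{ij} ≠ 0 }` (with the quotient ring
finite-dimensional over `ℂ`), and this minimum equals `l((m,n), Δ_D)`, the infimum
of the weighted degree `m·i + n·j` over the Newton diagram of `D`. -/
theorem interMult_generic_eq_min (D : MvPowerSeries (Fin 2) ℂ) (hD : D ≠ 0)
    (m n : ℕ) (hm : 0 < m) (hn : 0 < n) (hmn : Nat.Coprime m n) :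
    {t : ℂ | ¬ (FiniteDimensional ℂ (MvPowerSeries (Fin 2) ℂ ⧸
          Ideal.span {(MvPowerSeries.X 0 : MvPowerSeries (Fin 2) ℂ) ^ n -
            MvPowerSeries.C (σ := Fin 2) (R := ℂ) t * MvPowerSeries.X 1 ^ m, D}) ∧
        interMult ((MvPowerSeries.X 0 : MvPowerSeries (Fin 2) ℂ) ^ n -
            MvPowerSeries.C (σ := Fin 2) (R := ℂ) t * MvPowerSeries.X 1 ^ m) D =
          sInf {k : ℕ | ∃ d : Fin 2 →₀ ℕ, MvPowerSeries.coeff (R := ℂ) d D ≠ 0 ∧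
            k = m * d 0 + n * d 1})}.Finite ∧
    ((sInf {k : ℕ | ∃ d : Fin 2 →₀ ℕ, MvPowerSeries.coeff (R := ℂ) d D ≠ 0 ∧
        k = m * d 0 + n * d 1} : ℕ) : ℝ) =
      sInf ((fun p : ℝ × ℝ => m * p.1 + n * p.2) '' newtonDiagramOf D) := by
  have : NeZero m := ⟨hm.ne'⟩
  have : NeZero n := ⟨hn.ne'⟩
  obtain ⟨d₀, hd₀⟩ := (MvPowerSeries.ne_zero_iff_exists_coeff_ne_zero D).1 hD
  set N := sInf {k : ℕ | ∃ d : Fin 2 →₀ ℕ, MvPowerSeries.coeff d D ≠ 0 ∧ k = m * d 0 + n * d 1}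
  obtain ⟨d₁, hd₁, hN⟩ : N ∈ {k : ℕ | ∃ d : Fin 2 →₀ ℕ, MvPowerSeries.coeff d D ≠ 0 ∧
      k = m * d 0 + n * d 1} := Nat.sInf_mem ⟨_, d₀, hd₀, rfl⟩
  rw [← weight_pair_apply] at hN
  have hmin : ∀ d, MvPowerSeries.coeff d D ≠ 0 → N ≤ weight ![m, n] d :=
    fun d hd => Nat.sInf_le ⟨d, hd, weight_pair_apply m n d⟩
  have hP : weightedInitialPoly m n D N ≠ 0 := hN ▸ weightedInitialPoly_ne_zero hd₁
  refine ⟨(((Polynomial.finite_setOfPred_isRoot hP).union (Set.finite_singleton 0)).image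
    (· ^ n)).subset fun t ht => ?_, ?_⟩
  · obtain ⟨α, rfl⟩ := IsAlgClosed.exists_pow_nat_eq t hn
    by_contra hgen
    have hα : α ∉ {x | (weightedInitialPoly m n D N).IsRoot x} ∪ {0} := fun h => hgen ⟨α, h, rfl⟩
    simp only [Set.mem_union, Set.mem_ofPred_eq, Set.mem_singleton_iff, not_or] at hα
    exact ht (finiteDimensional_quotient_and_finrank_eq_order hmn hα.2
      (order_paramHom_eq hmin hα.1))
  · rw [sInf_image_newtonDiagramOf hd₁ (hN ▸ hmin), hN]
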